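/- arXiv:2605.27553 — 2 statements merged into one kernel-verified Lean document; each statement's English description precedes it below -/
import Mathlib

section
/- Let 0 < θ̄ ≤ π. For all θ with |θ| ≤ θ̄, sin(θ) ≤ cos(θ̄/2)(θ − θ̄/2) + sin(θ̄/2) and sin(θ) ≥ cos(θ̄/2)(θ + θ̄/2) − sin(θ̄/2). -/
/-!
The gap between the tangent line of `sin` at `a = θ̄/2` and `sin` has derivative `cos a - cos x`,
so on `[-2a, 2a]` it increases on `[-2a, -a]` and `[a, 2a]` and decreases on `[-a, a]`. Its
minimum is therefore at `a`, where it vanishes, or at `-2a`, where it equals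
`sin a + sin 2a - 3a cos a`; this is nonnegative by Huygens' inequality `3x ≤ 2 sin x + tan x`.
The lower envelope is the upper one reflected through the origin.
-/

open Real Set

namespace Real

theorem three_mul_le_two_mul_sin_add_tan {x : ℝ} (hx₀ : 0 ≤ x) (hx : x < π / 2) :
    3 * x ≤ 2 * sin x + tan x := by
  have hcos : ∀ y ∈ Ico 0 (π / 2), 0 < cos y := fun y hy =>
    cos_pos_of_mem_Ioo ⟨by linarith [pi_pos, hy.1], hy.2⟩
  have hderiv : ∀ y ∈ Ico 0 (π / 2), HasDerivAt (fun y => 2 * sin y + tan y - 3 * y)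
      (2 * cos y + 1 / cos y ^ 2 - 3) y := fun y hy =>
    (((hasDerivAt_sin y).const_mul 2).add (hasDerivAt_tan (hcos y hy).ne')).sub
      (by simpa using (hasDerivAt_id y).const_mul 3)
  have hmono : MonotoneOn (fun y => 2 * sin y + tan y - 3 * y) (Ico 0 (π / 2)) := by
    refine monotoneOn_of_deriv_nonneg (convex_Ico _ _)
      (fun y hy => (hderiv y hy).continuousAt.continuousWithinAt)
      (fun y hy => (hderiv y (interior_subset hy)).differentiableAt.differentiableWithinAt)
      (fun y hy => ?_)
    have hy := interior_subset hy
    have hc := hcos y hy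
    rw [(hderiv y hy).deriv, show 2 * cos y + 1 / cos y ^ 2 - 3
      = (cos y - 1) ^ 2 * (2 * cos y + 1) / cos y ^ 2 by field_simp; ring]
    positivity
  simpa using hmono ⟨le_rfl, by linarith⟩ ⟨hx₀, hx⟩ hx₀

theorem three_mul_mul_cos_le_sin_add_sin_two_mul {x : ℝ} (hx₀ : 0 ≤ x) (hx : x ≤ π / 2) :
    3 * x * cos x ≤ sin x + sin (2 * x) := by
  have hsin : 0 ≤ sin x := sin_nonneg_of_nonneg_of_le_pi hx₀ (by linarith [pi_pos])
  rcases hx.lt_or_eq with hx | rfl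
  · have hcos : 0 < cos x := cos_pos_of_mem_Ioo ⟨by linarith [pi_pos], hx⟩
    have := mul_le_mul_of_nonneg_right (three_mul_le_two_mul_sin_add_tan hx₀ hx) hcos.le
    rw [tan_eq_sin_div_cos] at this
    rw [sin_two_mul]
    field_simp at this
    linarith
  · simp [sin_two_mul]

noncomputable def sinTangent (a x : ℝ) : ℝ := cos a * (x - a) + sin a

theorem hasDerivAt_sinTangent_sub_sin (a x : ℝ) :
    HasDerivAt (fun y => sinTangent a y - sin y) (cos a - cos x) x := by
  have h := ((((hasDerivAt_id' x).sub_const a).const_mul (cos a)).add_const (sin a)).sub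
    (hasDerivAt_sin x)
  rw [mul_one] at h
  exact h

theorem monotoneOn_sinTangent_sub_sin {a lo hi : ℝ} (h : ∀ x ∈ Ioo lo hi, cos x ≤ cos a) :
    MonotoneOn (fun y => sinTangent a y - sin y) (Icc lo hi) := by
  refine monotoneOn_of_deriv_nonneg (convex_Icc lo hi)
    (fun x _ => (hasDerivAt_sinTangent_sub_sin a x).continuousAt.continuousWithinAt)
    (fun x _ => (hasDerivAt_sinTangent_sub_sin a x).differentiableAt.differentiableWithinAt)
    (fun x hx => ?_)
  rw [interior_Icc] at hx
  rw [(hasDerivAt_sinTangent_sub_sin a x).deriv]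
  linarith [h x hx]

theorem antitoneOn_sinTangent_sub_sin {a lo hi : ℝ} (h : ∀ x ∈ Ioo lo hi, cos a ≤ cos x) :
    AntitoneOn (fun y => sinTangent a y - sin y) (Icc lo hi) := by
  refine antitoneOn_of_deriv_nonpos (convex_Icc lo hi)
    (fun x _ => (hasDerivAt_sinTangent_sub_sin a x).continuousAt.continuousWithinAt)
    (fun x _ => (hasDerivAt_sinTangent_sub_sin a x).differentiableAt.differentiableWithinAt)
    (fun x hx => ?_)
  rw [interior_Icc] at hx
  rw [(hasDerivAt_sinTangent_sub_sin a x).deriv]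
  linarith [h x hx]

theorem sin_le_sinTangent {a x : ℝ} (ha₀ : 0 ≤ a) (ha : a ≤ π / 2)
    (hx : x ∈ Icc (-(2 * a)) (2 * a)) :
    sin x ≤ sinTangent a x := by
  suffices 0 ≤ sinTangent a x - sin x by linarith
  have cos_le {y} (h₁ : a ≤ |y|) (h₂ : |y| ≤ π) : cos y ≤ cos a := by
    simpa [cos_abs] using cos_le_cos_of_nonneg_of_le_pi ha₀ h₂ h₁
  rcases le_total x (-a) with hxa | hxa
  · have hgap := monotoneOn_sinTangent_sub_sin (a := a) (lo := -(2 * a)) (hi := -a)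
      (fun y hy => cos_le (by rw [abs_of_neg (by linarith [hy.2])]; linarith [hy.2])
        (by rw [abs_of_neg (by linarith [hy.2])]; linarith [hy.1]))
      ⟨le_rfl, by linarith⟩ ⟨hx.1, hxa⟩ hx.1
    have := three_mul_mul_cos_le_sin_add_sin_two_mul ha₀ ha
    simp only [sinTangent, sin_neg] at hgap ⊢
    linarith
  rcases le_total x a with hxa' | hxa'
  · have hgap := antitoneOn_sinTangent_sub_sin (a := a) (lo := -a) (hi := a)
      (fun y hy => by
        simpa [cos_abs] using cos_le_cos_of_nonneg_of_le_pi (abs_nonneg y) (by linarith)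
          (abs_le.2 ⟨hy.1.le, hy.2.le⟩))
      ⟨hxa, hxa'⟩ ⟨by linarith, le_rfl⟩ hxa'
    simpa [sinTangent] using hgap
  · have hgap := monotoneOn_sinTangent_sub_sin (a := a) (lo := a) (hi := 2 * a)
      (fun y hy => cos_le (by rw [abs_of_pos (by linarith [hy.1])]; linarith [hy.1])
        (by rw [abs_of_pos (by linarith [hy.1])]; linarith [hy.2]))
      ⟨le_rfl, by linarith⟩ ⟨hxa', hx.2⟩ hxa'
    simpa [sinTangent] using hgap

end Real

theorem sin_linear_envelopes_general (θb θ : ℝ) (hθbπ : θb ≤ Real.pi)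
    (hθ : |θ| ≤ θb) :
    Real.sin θ ≤ Real.cos (θb / 2) * (θ - θb / 2) + Real.sin (θb / 2) ∧
    Real.sin θ ≥ Real.cos (θb / 2) * (θ + θb / 2) - Real.sin (θb / 2) := by
  obtain ⟨hθ₁, hθ₂⟩ := abs_le.1 hθ
  have ha₀ : 0 ≤ θb / 2 := by linarith [abs_nonneg θ]
  have ha : θb / 2 ≤ π / 2 := by linarith
  refine ⟨sin_le_sinTangent ha₀ ha ⟨by linarith, by linarith⟩, ?_⟩
  have := sin_le_sinTangent ha₀ ha (x := -θ) ⟨by linarith, by linarith⟩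
  simp only [sinTangent, sin_neg] at this
  linarith

/-- Linear envelopes for the sine function over a symmetric interval:
the tangent lines at `θ̄/2` and `-θ̄/2` bound `sin` from above and below. -/
theorem sin_linear_envelopes (θb θ : ℝ) (hθb0 : 0 < θb) (hθbπ : θb ≤ Real.pi)
    (hθ : |θ| ≤ θb) :
    Real.sin θ ≤ Real.cos (θb / 2) * (θ - θb / 2) + Real.sin (θb / 2) ∧
    Real.sin θ ≥ Real.cos (θb / 2) * (θ + θb / 2) - Real.sin (θb / 2) :=
  sin_linear_envelopes_general θb θ hθbπ hθ
end

section
/- Let g : [−θ̄, θ̄] → ℝ be defined by g(θ) = 1 − ((1−cos θ̄)/θ̄²)θ² − cos θ. For 0 < θ̄ ≤ π/2, g(θ) ≥ 0 on [−θ̄, θ̄] with equality exactly at θ ∈ {−θ̄, 0, θ̄}. -/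
/-!
Writing `1 - cos x = 2 sin² (x / 2)` gives `(1 - cos x) / x² = (sin y / y)² / 2` with `y = x / 2`,
and `sin y / y`, the slope of the chord of the concave function `sin` from `0`, is strictly
decreasing and nonnegative on `(0, π]`. Hence `(1 - cos x) / x²` is strictly decreasing on
`(0, 2π]`, so for `0 < |θ| < θ̄` the envelope coefficient `(1 - cos θ̄) / θ̄²` is strictly below
`(1 - cos θ) / θ²`, i.e. the gap is positive. At `θ = 0` and `θ = ±θ̄` it vanishes by inspection.
-/

open Real Set

namespace Real

theorem sin_div_self_strictAntiOn : StrictAntiOn (fun x => sin x / x) (Ioc 0 π) := by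
  intro x hx y hy hxy
  have h := strictConcaveOn_sin_Icc.secant_strict_mono (a := 0) ⟨le_rfl, pi_pos.le⟩
    (Ioc_subset_Icc_self hx) (Ioc_subset_Icc_self hy) hx.1.ne' hy.1.ne' hxy
  simpa only [sin_zero, sub_zero] using h

theorem one_sub_cos_div_sq_eq (x : ℝ) :
    (1 - cos x) / x ^ 2 = (sin (x / 2) / (x / 2)) ^ 2 / 2 := by
  have h := sin_sq_eq_half_sub (x / 2)
  rw [mul_div_cancel₀ x two_ne_zero] at h
  rw [div_pow, h]
  ring

theorem one_sub_cos_div_sq_strictAntiOn :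
    StrictAntiOn (fun x => (1 - cos x) / x ^ 2) (Ioc 0 (2 * π)) := by
  intro x hx y hy hxy
  have half_mem {z : ℝ} (hz : z ∈ Ioc 0 (2 * π)) : z / 2 ∈ Ioc 0 π :=
    ⟨half_pos hz.1, by linarith [hz.2]⟩
  have hlt := sin_div_self_strictAntiOn (half_mem hx) (half_mem hy) (by linarith)
  have hnonneg : 0 ≤ sin (y / 2) / (y / 2) :=
    div_nonneg (sin_nonneg_of_nonneg_of_le_pi (half_mem hy).1.le (half_mem hy).2)
      (half_mem hy).1.le
  simp only [one_sub_cos_div_sq_eq]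
  gcongr

theorem one_sub_cos_div_sq_mul_sq_lt {θb θ : ℝ} (hθb : θb ≤ 2 * π) (hθ₀ : θ ≠ 0)
    (hθ : |θ| < θb) : (1 - cos θb) / θb ^ 2 * θ ^ 2 < 1 - cos θ := by
  have habs : 0 < |θ| := abs_pos.2 hθ₀
  have h : (1 - cos θb) / θb ^ 2 < (1 - cos |θ|) / |θ| ^ 2 :=
    one_sub_cos_div_sq_strictAntiOn ⟨habs, by linarith⟩ ⟨habs.trans hθ, hθb⟩ hθ
  rw [cos_abs, sq_abs] at h
  exact (lt_div_iff₀ (by positivity)).1 h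

end Real

/-- Exact tightness of the quadratic upper envelope of cosine: for
`0 < θ̄ ≤ π/2`, the gap `g(θ) = 1 − ((1−cos θ̄)/θ̄²)θ² − cos θ` is nonnegative
on `[−θ̄, θ̄]` and vanishes exactly at `θ ∈ {−θ̄, 0, θ̄}`. -/
theorem cos_quadratic_envelope_tightness (θb : ℝ)
    (hθb0 : 0 < θb) (hθbπ : θb ≤ Real.pi / 2) :
    ∀ θ ∈ Set.Icc (-θb) θb,
      0 ≤ 1 - ((1 - Real.cos θb) / θb ^ 2) * θ ^ 2 - Real.cos θ ∧
      (1 - ((1 - Real.cos θb) / θb ^ 2) * θ ^ 2 - Real.cos θ = 0 ↔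
        θ = -θb ∨ θ = 0 ∨ θ = θb) := by
  intro θ hθ
  by_cases hzero : θ = -θb ∨ θ = 0 ∨ θ = θb
  · have hgap : 1 - ((1 - cos θb) / θb ^ 2) * θ ^ 2 - cos θ = 0 := by
      rcases hzero with rfl | rfl | rfl <;> field_simp [hθb0.ne'] <;> simp
    exact ⟨hgap.ge, iff_of_true hgap hzero⟩
  · obtain ⟨hneg, h₀, hpos⟩ : θ ≠ -θb ∧ θ ≠ 0 ∧ θ ≠ θb := by simpa only [not_or] using hzero
    have hθ : |θ| < θb := abs_lt.2 ⟨lt_of_le_of_ne hθ.1 hneg.symm, lt_of_le_of_ne hθ.2 hpos⟩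
    have hgap := one_sub_cos_div_sq_mul_sq_lt (by linarith [pi_pos]) h₀ hθ
    constructor
    · linarith
    · exact iff_of_false (by linarith) hzero
end
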